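/- For every n ∈ ℕ^p, the function assigning to a polymatroid 𝒫 on [p] with cage m the value i_{n+ℝ_{≤0}^p}(𝒫) ∈ {0,1}, which equals 1 if B(𝒫) ∩ (n + ℝ_{≤0}^p) ≠ ∅ (equivalently, if there exists w ∈ B(𝒫) with w_j ≤ n_j for all j) and 0 otherwise, is valuative: for any polymatroids 𝒫_1,…,𝒫_k on [p] with cage m and integers a_1,…,a_k with Σ_{i=1}^{k} a_i · 1_{B(𝒫_i)}(v) = 0 for all v ∈ ℝ^p, one has Σ_{i=1}^{k} a_i · i_{n+ℝ_{≤0}^p}(𝒫_i) = 0. -/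

import Mathlib

/-! The shifted indicator is the Euler characteristic `χ(K) = [K ≠ ∅]` of
`K = B(𝒫) ∩ (n + ℝ_{≤0}^p)`, and intersecting with the closed convex orthant preserves any
linear relation among indicator functions, so it suffices that `χ` is a valuation on compact
convex subsets of `ℝ^q`. On `ℝ`, comparing a relation `∑ aᵢ 1_{Sᵢ} = 0` at `x` with its value
just to the right of `x` shows that the intervals with right endpoint `x` have coefficients
summing to zero; summing over `x` gives `∑ aᵢ χ(Sᵢ) = 0`. In higher dimension, the case of `ℝ`
applied on every fibre `{t | (t, y) ∈ Kᵢ}` turns the relation into one among the projections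
of the `Kᵢ`, which are again compact and convex, and induction on `q` concludes. -/

open scoped BigOperators

attribute [local instance] Classical.propDecidable

namespace CavePaper

variable {p : ℕ}

/-- `rk` is the rank function of a polymatroid on `[p]` with cage `m`:
normalized, monotone, submodular, and `rk {i} ≤ m i` for all `i`. -/
def IsPolymatroid (m : Fin p → ℕ) (rk : Finset (Fin p) → ℕ) : Prop :=
  rk ∅ = 0 ∧
    (∀ J₁ J₂ : Finset (Fin p), J₁ ⊆ J₂ → rk J₁ ≤ rk J₂) ∧
    (∀ J₁ J₂ : Finset (Fin p), rk (J₁ ∩ J₂) + rk (J₁ ∪ J₂) ≤ rk J₁ + rk J₂) ∧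
    (∀ i : Fin p, rk {i} ≤ m i)

/-- An integer point lies in the independence polytope `I(𝒫)`. -/
def inIndep (rk : Finset (Fin p) → ℕ) (v : Fin p → ℤ) : Prop :=
  (∀ i, 0 ≤ v i) ∧ ∀ J : Finset (Fin p), ∑ j ∈ J, v j ≤ (rk J : ℤ)

/-- An integer point lies in the base polytope `B(𝒫)`. -/
def inBase (rk : Finset (Fin p) → ℕ) (v : Fin p → ℤ) : Prop :=
  inIndep rk v ∧ ∑ i, v i = (rk Finset.univ : ℤ)

/-- The indicator function `1_𝒫` of the base polytope, at integer points. -/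
noncomputable def baseInd (rk : Finset (Fin p) → ℕ) (v : Fin p → ℤ) : ℤ :=
  if inBase rk v then 1 else 0

/-- `max_{i<j} 1_𝒫(n - e_i + e_j)`. -/
noncomputable def cmax (rk : Finset (Fin p) → ℕ) (n : Fin p → ℕ) (i : Fin p) : ℤ :=
  if ∃ j, i < j ∧ inBase rk
      (fun k => (n k : ℤ) - (if k = i then 1 else 0) + (if k = j then 1 else 0))
    then 1 else 0

/-- The cave polynomial of a polymatroid: the expansion of
`∑_{n ∈ ℕ^p, |n| = rk(𝒫)} 1_𝒫(n) ∏_{i=1}^{p-1} (1 - max_{i<j} 1_𝒫(n-e_i+e_j) tᵢ⁻¹) tⁿ`.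
Each factor `(1 - cᵢ tᵢ⁻¹) tᵢ^{nᵢ}` is written as `tᵢ^{nᵢ} - cᵢ tᵢ^{nᵢ-1}`, which is
legitimate since `cᵢ ≠ 0` forces `nᵢ ≥ 1`; the factor for the last index is `tᵢ^{nᵢ}`. -/
noncomputable def cavePoly (rk : Finset (Fin p) → ℕ) : MvPolynomial (Fin p) ℤ :=
  ∑ n ∈ Finset.Nat.antidiagonalTuple p (rk Finset.univ),
    MvPolynomial.C (baseInd rk (fun i => (n i : ℤ))) *
      ∏ i : Fin p,
        if (i : ℕ) < p - 1 then
          MvPolynomial.X i ^ (n i) -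
            MvPolynomial.C (cmax rk n i) * MvPolynomial.X i ^ (n i - 1)
        else MvPolynomial.X i ^ (n i)

/-- A set `S ⊆ ℤ^q` is M-convex: it is nonempty, finite, and satisfies the
symmetric exchange property. -/
def MConvex {q : ℕ} (S : Set (Fin q → ℤ)) : Prop :=
  S.Nonempty ∧ S.Finite ∧
    ∀ u ∈ S, ∀ v ∈ S, ∀ i, v i < u i →
      ∃ j, u j < v j ∧
        (fun k => u k - (if k = i then 1 else 0) + (if k = j then 1 else 0)) ∈ S

/-- The Möbius function `μ_𝒫 : ℤ^p → ℤ` of a polymatroid: `0` outside `I(𝒫)`,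
`1` on `B(𝒫)`, and `1 - ∑_{w ∈ (n + ℤ_{>0}^p) ∩ I(𝒫)} μ_𝒫(w)` on `I(𝒫) \ B(𝒫)`.
(Every integer point of `I(𝒫)` lies in the box `0 ≤ w i ≤ rk {i}`; the redundant
condition `∑ n < ∑ w` — automatic for `p ≥ 1` — ensures termination.) -/
noncomputable def mobius (rk : Finset (Fin p) → ℕ) (n : Fin p → ℤ) : ℤ :=
  if inIndep rk n then
    if inBase rk n then 1
    else
      1 - ∑ w ∈ ((Finset.Icc (fun _ => (0 : ℤ)) (fun i => (rk {i} : ℤ))).filter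
            (fun w => (∀ i, n i < w i) ∧ (∑ i, n i) < (∑ i, w i) ∧ inIndep rk w)).attach,
          mobius rk w.1
  else 0
termination_by ((rk Finset.univ : ℤ) - ∑ i, n i).toNat
decreasing_by
  have hm := w.2
  simp only [Finset.mem_filter] at hm
  have h2 : (∑ i, w.1 i) ≤ (rk Finset.univ : ℤ) := by
    simpa using hm.2.2.2.2 Finset.univ
  have _h1 : (∑ i, n i) < ∑ i, w.1 i := hm.2.2.1
  omega

/-- The base polytope `B(𝒫) ⊆ ℝ^p`. -/
def BaseSet (rk : Finset (Fin p) → ℕ) : Set (Fin p → ℝ) :=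
  {v | (∀ i, 0 ≤ v i) ∧ (∑ i, v i = (rk Finset.univ : ℝ)) ∧
    ∀ J : Finset (Fin p), ∑ j ∈ J, v j ≤ (rk J : ℝ)}

/-- The rank function `rk_S(J) = max_{u ∈ S} ∑_{j∈J} u_j` of a (finite, nonempty)
M-convex set `S ⊆ ℕ^p`. -/
noncomputable def rkOf (S : Set (Fin p → ℤ)) (J : Finset (Fin p)) : ℕ :=
  sSup ((fun u => (∑ j ∈ J, u j).toNat) '' S)

open Filter Topology

section EulerCharacteristic

variable {ι : Type*} [Fintype ι]

theorem eventually_nhdsGT_mem_iff {S : Set ℝ} (hcomp : IsCompact S) (hconv : Convex ℝ S)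
    (x : ℝ) : ∀ᶠ y in 𝓝[>] x, (y ∈ S ↔ x ∈ S ∧ x < sSup S) := by
  by_cases hx : x ∈ S
  · rcases (le_csSup hcomp.bddAbove hx).lt_or_eq with hlt | heq
    · have hIcc : Set.Icc x (sSup S) ⊆ S :=
        hconv.ordConnected.out hx (hcomp.sSup_mem ⟨x, hx⟩)
      filter_upwards [Ioc_mem_nhdsGT hlt] with y hy
      exact iff_of_true (hIcc (Set.Ioc_subset_Icc_self hy)) ⟨hx, hlt⟩
    · filter_upwards [self_mem_nhdsWithin] with y (hy : x < y)
      refine iff_of_false (fun hyS => ?_) (fun h => h.2.ne heq)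
      exact hy.not_ge (heq ▸ le_csSup hcomp.bddAbove hyS)
  · filter_upwards [nhdsWithin_le_nhds (hcomp.isClosed.compl_mem_nhds hx)] with y hy
    exact iff_of_false hy (fun h => hx h.1)

theorem sum_mul_ite_nonempty_eq_zero_of_real (S : ι → Set ℝ) (a : ι → ℤ)
    (hcomp : ∀ i, IsCompact (S i)) (hconv : ∀ i, Convex ℝ (S i))
    (hrel : ∀ t, ∑ i, a i * (if t ∈ S i then 1 else 0) = 0) :
    ∑ i, a i * (if (S i).Nonempty then 1 else 0) = 0 := by
  have hright : ∀ x, ∑ i, a i * (if x ∈ S i ∧ x < sSup (S i) then 1 else 0) = 0 := by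
    intro x
    obtain ⟨y, hy⟩ := (eventually_all.2 fun i =>
      eventually_nhdsGT_mem_iff (hcomp i) (hconv i) x).exists
    simpa only [hy] using hrel y
  have hendpoint : ∀ i x, (if x ∈ S i then 1 else 0) - (if x ∈ S i ∧ x < sSup (S i) then 1 else 0)
      = if x ∈ S i ∧ x = sSup (S i) then (1 : ℤ) else 0 := by
    intro i x
    have := fun hx : x ∈ S i => le_csSup (hcomp i).bddAbove hx
    split_ifs <;> grind
  calc ∑ i, a i * (if (S i).Nonempty then 1 else 0)
      = ∑ i, ∑ x ∈ Finset.univ.image (fun j => sSup (S j)),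
          a i * (if x ∈ S i ∧ x = sSup (S i) then 1 else 0) := by
        refine Finset.sum_congr rfl fun i _ => ?_
        rw [← Finset.mul_sum]
        simp_rw [and_comm (a := _ ∈ S i), ite_and, Finset.sum_ite_eq']
        have hmem : sSup (S i) ∈ S i ↔ (S i).Nonempty := ⟨fun h => ⟨_, h⟩, (hcomp i).sSup_mem⟩
        simp [hmem]
    _ = ∑ x ∈ Finset.univ.image (fun j => sSup (S j)), (∑ i, a i * (if x ∈ S i then 1 else 0)
          - ∑ i, a i * (if x ∈ S i ∧ x < sSup (S i) then 1 else 0)) := by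
        rw [Finset.sum_comm]
        simp_rw [← Finset.sum_sub_distrib, ← mul_sub, hendpoint]
    _ = 0 := by simp only [hrel, hright, Finset.sum_const_zero, sub_self]

theorem setOf_cons_mem_eq_image {q : ℕ} (K : Set (Fin (q + 1) → ℝ)) (y : Fin q → ℝ) :
    {t | Fin.cons t y ∈ K} = (fun v => v 0) '' (K ∩ Fin.tail ⁻¹' {y}) := by
  ext t
  constructor
  · intro ht
    exact ⟨Fin.cons t y, ⟨ht, Fin.tail_cons _ _⟩, Fin.cons_zero _ _⟩
  · rintro ⟨v, ⟨hv, rfl⟩, rfl⟩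
    simpa [Fin.cons_self_tail] using hv

theorem convex_setOf_cons_mem {q : ℕ} {K : Set (Fin (q + 1) → ℝ)} (hK : Convex ℝ K)
    (y : Fin q → ℝ) : Convex ℝ {t | Fin.cons t y ∈ K} := by
  rw [setOf_cons_mem_eq_image]
  exact (hK.inter ((convex_singleton y).linear_preimage
    (LinearMap.funLeft ℝ ℝ Fin.succ))).linear_image (LinearMap.proj 0)

theorem isCompact_setOf_cons_mem {q : ℕ} {K : Set (Fin (q + 1) → ℝ)} (hK : IsCompact K)
    (y : Fin q → ℝ) : IsCompact {t | Fin.cons t y ∈ K} := by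
  rw [setOf_cons_mem_eq_image]
  exact (hK.inter_right (isClosed_singleton.preimage (by fun_prop))).image (continuous_apply 0)

theorem mem_image_tail_iff_nonempty {q : ℕ} {K : Set (Fin (q + 1) → ℝ)} {y : Fin q → ℝ} :
    y ∈ Fin.tail '' K ↔ {t | Fin.cons t y ∈ K}.Nonempty := by
  constructor
  · rintro ⟨v, hv, rfl⟩
    exact ⟨v 0, by simpa [Fin.cons_self_tail] using hv⟩
  · rintro ⟨t, ht⟩
    exact ⟨_, ht, Fin.tail_cons _ _⟩

theorem sum_mul_ite_nonempty_eq_zero {q : ℕ} (K : ι → Set (Fin q → ℝ)) (a : ι → ℤ)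
    (hcomp : ∀ i, IsCompact (K i)) (hconv : ∀ i, Convex ℝ (K i))
    (hrel : ∀ v, ∑ i, a i * (if v ∈ K i then 1 else 0) = 0) :
    ∑ i, a i * (if (K i).Nonempty then 1 else 0) = 0 := by
  induction q with
  | zero =>
    have hne : ∀ i, (K i).Nonempty ↔ 0 ∈ K i :=
      fun i => ⟨fun ⟨v, hv⟩ => Subsingleton.elim v 0 ▸ hv, fun h => ⟨0, h⟩⟩
    simpa only [hne] using hrel 0
  | succ q ih =>
    have hproj := ih (fun i => Fin.tail '' K i)
      (fun i => (hcomp i).image (by fun_prop))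
      (fun i => (hconv i).linear_image (LinearMap.funLeft ℝ ℝ Fin.succ))
      (fun y => by
        simp only [mem_image_tail_iff_nonempty]
        exact sum_mul_ite_nonempty_eq_zero_of_real _ a
          (fun i => isCompact_setOf_cons_mem (hcomp i) y)
          (fun i => convex_setOf_cons_mem (hconv i) y) (fun t => hrel (Fin.cons t y)))
    simpa only [Set.image_nonempty] using hproj

theorem sum_mul_ite_inter_nonempty_eq_zero {q : ℕ} (K : ι → Set (Fin q → ℝ)) (a : ι → ℤ)
    {C : Set (Fin q → ℝ)} (hC : IsClosed C) (hCconv : Convex ℝ C)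
    (hcomp : ∀ i, IsCompact (K i)) (hconv : ∀ i, Convex ℝ (K i))
    (hrel : ∀ v, ∑ i, a i * (if v ∈ K i then 1 else 0) = 0) :
    ∑ i, a i * (if (K i ∩ C).Nonempty then 1 else 0) = 0 := by
  refine sum_mul_ite_nonempty_eq_zero _ a (fun i => (hcomp i).inter_right hC)
    (fun i => (hconv i).inter hCconv) fun v => ?_
  by_cases hv : v ∈ C
  · simpa only [Set.mem_inter_iff, hv, and_true] using hrel v
  · simp only [Set.mem_inter_iff, hv, and_false, if_false, mul_zero, Finset.sum_const_zero]

end EulerCharacteristic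

theorem convex_baseSet (rk : Finset (Fin p) → ℕ) : Convex ℝ (BaseSet rk) := by
  intro x ⟨hx0, hxsum, hxJ⟩ y ⟨hy0, hysum, hyJ⟩ s t hs ht hst
  have hsum : ∀ J : Finset (Fin p), ∑ j ∈ J, (s • x + t • y) j
      = s * ∑ j ∈ J, x j + t * ∑ j ∈ J, y j := by
    intro J
    simp only [Pi.add_apply, Pi.smul_apply, smul_eq_mul, Finset.sum_add_distrib, Finset.mul_sum]
  refine ⟨fun j => ?_, ?_, fun J => ?_⟩
  · exact add_nonneg (mul_nonneg hs (hx0 j)) (mul_nonneg ht (hy0 j))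
  · rw [hsum, hxsum, hysum, ← add_mul, hst, one_mul]
  · calc ∑ j ∈ J, (s • x + t • y) j = s * ∑ j ∈ J, x j + t * ∑ j ∈ J, y j := hsum J
      _ ≤ s * rk J + t * rk J := by gcongr <;> [exact hxJ J; exact hyJ J]
      _ = rk J := by rw [← add_mul, hst, one_mul]

theorem isCompact_baseSet (rk : Finset (Fin p) → ℕ) : IsCompact (BaseSet rk) := by
  have hclosed : IsClosed (BaseSet rk) := by
    simp only [BaseSet, Set.ofPred_and, Set.ofPred_forall]
    refine (isClosed_iInter fun j => isClosed_le (by fun_prop) (by fun_prop)).inter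
      ((isClosed_eq (by fun_prop) (by fun_prop)).inter
        (isClosed_iInter fun J => isClosed_le (by fun_prop) (by fun_prop)))
  refine (isCompact_Icc (a := 0) (b := fun _ => (rk Finset.univ : ℝ))).of_isClosed_subset
    hclosed fun v ⟨hv0, hvsum, _⟩ => ⟨hv0, fun j => ?_⟩
  exact hvsum ▸ Finset.single_le_sum (fun j _ => hv0 j) (Finset.mem_univ j)

theorem shifted_indicator_valuative_general
    (p : ℕ) (n : Fin p → ℕ) (k : ℕ)
    (P : Fin k → Finset (Fin p) → ℕ)
    (a : Fin k → ℤ)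
    (hval : ∀ v : Fin p → ℝ,
      (∑ i, a i * (if v ∈ BaseSet (P i) then (1 : ℤ) else 0)) = 0) :
    (∑ i, a i * (if ∃ w ∈ BaseSet (P i), ∀ j, w j ≤ (n j : ℝ) then (1 : ℤ) else 0)) = 0 :=
  sum_mul_ite_inter_nonempty_eq_zero (fun i => BaseSet (P i)) a isClosed_Iic
    (convex_Iic fun j => (n j : ℝ)) (fun i => isCompact_baseSet (P i))
    (fun i => convex_baseSet (P i)) hval

/-- For every `n ∈ ℕ^p`, the function
`𝒫 ↦ i_{n + ℝ_{≤0}^p}(𝒫)` — equal to `1` if there exists `w ∈ B(𝒫)` with `w ≤ n`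
coordinatewise and `0` otherwise — is valuative. -/
theorem shifted_indicator_valuative
    (p : ℕ) (hp : 1 ≤ p) (m : Fin p → ℕ) (n : Fin p → ℕ) (k : ℕ)
    (P : Fin k → Finset (Fin p) → ℕ) (hP : ∀ i, IsPolymatroid m (P i))
    (a : Fin k → ℤ)
    (hval : ∀ v : Fin p → ℝ,
      (∑ i, a i * (if v ∈ BaseSet (P i) then (1 : ℤ) else 0)) = 0) :
    (∑ i, a i * (if ∃ w ∈ BaseSet (P i), ∀ j, w j ≤ (n j : ℝ) then (1 : ℤ) else 0)) = 0 :=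
  shifted_indicator_valuative_general p n k P a hval

end CavePaper
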